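/- (Angle bound from a uniform lower bound on linear combinations.) Let v,w be vectors in a real inner product space and m>0 such that ‖a v + b w‖² ≥ m²(a²+b²) for all (a,b)∈ℝ². Then v,w≠0 and |⟨v,w⟩| ≤ ‖v‖‖w‖ − m²; in particular, if moreover ‖v‖,‖w‖ ≤ M, then |⟨v,w⟩| ≤ (1 − m²/M²)‖v‖‖w‖. -/
import Mathlib


open scoped RealInnerProductSpace

private lemma expand_sq {F : Type*} [NormedAddCommGroup F] [InnerProductSpace ℝ F]
    (v w : F) (a b : ℝ) :
    ‖a • v + b • w‖ ^ 2 = a ^ 2 * ‖v‖ ^ 2 + 2 * (a * b * ⟪v, w⟫) + b ^ 2 * ‖w‖ ^ 2 := by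
  rw [norm_add_sq_real, norm_smul, norm_smul, real_inner_smul_left, real_inner_smul_right]
  simp only [Real.norm_eq_abs, mul_pow, sq_abs]
  ring

/-- **Angle bound from a uniform lower bound on linear combinations.**
If `‖a v + b w‖² ≥ m²(a² + b²)` for all `(a,b) ∈ ℝ²` with `m > 0`, then `v, w ≠ 0` and
`|⟨v,w⟩| ≤ ‖v‖‖w‖ − m²`; in particular if moreover `‖v‖, ‖w‖ ≤ M` then
`|⟨v,w⟩| ≤ (1 − m²/M²)‖v‖‖w‖`. -/
theorem angle_bound_of_uniform_lower_bound
    {F : Type*} [NormedAddCommGroup F] [InnerProductSpace ℝ F]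
    (v w : F) (m : ℝ) (hm : 0 < m)
    (h : ∀ a b : ℝ, m ^ 2 * (a ^ 2 + b ^ 2) ≤ ‖a • v + b • w‖ ^ 2) :
    v ≠ 0 ∧ w ≠ 0 ∧ |⟪v, w⟫| ≤ ‖v‖ * ‖w‖ - m ^ 2 ∧
      ∀ M : ℝ, ‖v‖ ≤ M → ‖w‖ ≤ M →
        |⟪v, w⟫| ≤ (1 - m ^ 2 / M ^ 2) * (‖v‖ * ‖w‖) := by
  have hv2 : m ^ 2 ≤ ‖v‖ ^ 2 := by have := h 1 0; simpa using this
  have hw2 : m ^ 2 ≤ ‖w‖ ^ 2 := by have := h 0 1; simpa using this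
  have hnv : 0 < ‖v‖ := by nlinarith [norm_nonneg v]
  have hnw : 0 < ‖w‖ := by nlinarith [norm_nonneg w]
  have hv0 : v ≠ 0 := by intro hv; rw [hv, norm_zero] at hnv; exact lt_irrefl 0 hnv
  have hw0 : w ≠ 0 := by intro hw; rw [hw, norm_zero] at hnw; exact lt_irrefl 0 hnw
  set ip := ⟪v, w⟫ with hip
  -- choose sign
  set s : ℝ := if 0 ≤ ip then (-1 : ℝ) else 1 with hs
  have hs2 : s ^ 2 = 1 := by by_cases h0 : 0 ≤ ip <;> simp [hs, h0]
  have hsip : s * ip = -|ip| := by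
    by_cases h0 : 0 ≤ ip
    · simp [hs, h0, abs_of_nonneg h0]
    · push_neg at h0
      simp [hs, not_le.2 h0, abs_of_neg h0]
  set a : ℝ := Real.sqrt (‖w‖ / ‖v‖) with ha
  set b : ℝ := s * Real.sqrt (‖v‖ / ‖w‖) with hb
  have ha2 : a ^ 2 = ‖w‖ / ‖v‖ := Real.sq_sqrt (by positivity)
  have hb2 : b ^ 2 = ‖v‖ / ‖w‖ := by
    rw [hb, mul_pow, hs2, one_mul, Real.sq_sqrt (by positivity)]
  have hab : a * b = s := by
    have h1 : ‖w‖ / ‖v‖ * (‖v‖ / ‖w‖) = 1 := by field_simp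
    rw [ha, hb, show Real.sqrt (‖w‖ / ‖v‖) * (s * Real.sqrt (‖v‖ / ‖w‖))
        = Real.sqrt (‖w‖ / ‖v‖) * Real.sqrt (‖v‖ / ‖w‖) * s from by ring,
      ← Real.sqrt_mul (by positivity), h1, Real.sqrt_one, one_mul]
  have hkey := h a b
  rw [expand_sq, ha2, hb2, hab, hsip] at hkey
  have hda : ‖w‖ / ‖v‖ * ‖v‖ ^ 2 = ‖w‖ * ‖v‖ := by field_simp
  have hdb : ‖v‖ / ‖w‖ * ‖w‖ ^ 2 = ‖v‖ * ‖w‖ := by field_simp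
  rw [hda, hdb] at hkey
  have hge2 : (2 : ℝ) ≤ ‖w‖ / ‖v‖ + ‖v‖ / ‖w‖ := by
    rw [div_add_div _ _ (ne_of_gt hnv) (ne_of_gt hnw), le_div_iff₀ (by positivity)]
    nlinarith [sq_nonneg (‖v‖ - ‖w‖)]
  have hstep : m ^ 2 * 2 ≤ m ^ 2 * (‖w‖ / ‖v‖ + ‖v‖ / ‖w‖) :=
    mul_le_mul_of_nonneg_left hge2 (sq_nonneg m)
  have hmain : |ip| ≤ ‖v‖ * ‖w‖ - m ^ 2 := by linarith
  refine ⟨hv0, hw0, hmain, fun M hvM hwM => ?_⟩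
  have hM : 0 < M := lt_of_lt_of_le hnv hvM
  have hprod : ‖v‖ * ‖w‖ ≤ M ^ 2 := by nlinarith
  have : m ^ 2 / M ^ 2 * (‖v‖ * ‖w‖) ≤ m ^ 2 := by
    rw [div_mul_eq_mul_div, div_le_iff₀ (by positivity)]
    nlinarith
  have hexp : (1 - m ^ 2 / M ^ 2) * (‖v‖ * ‖w‖)
      = ‖v‖ * ‖w‖ - m ^ 2 / M ^ 2 * (‖v‖ * ‖w‖) := by ring
  linarith
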